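/- arXiv:1807.09344 — 2 statements merged into one kernel-verified Lean document; each statement's English description precedes it below -/
import Mathlib

section
/- For all complex numbers q and z with |q| < 1, (-zq;q)_∞ = 1 + ∑_{m=1}^{∞} [ ((-zq;q)_{m-1}/(q;q)_{m-1}) z^m q^{m(3m-1)/2} + ((-zq;q)_m/(q;q)_m) z^m q^{m(3m+1)/2} ]. -/
/-!
Write `A_m = (-zq;q)_m / (q;q)_m` and `G(z) = ∑ A_m z^m q^{m(3m+1)/2} (1 + z q^{2m+1})`, which is
the right-hand side with the terms regrouped. `G` satisfies Euler's functional equation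
`G(z) = (1 + zq) G(zq)`: termwise, the difference of the two sides is `Y_m - Y_{m+1}` with
`Y_m = A_m z^m q^{m(3m+1)/2} (1 - q^m)`, and `Y_0 = 0`. Iterating gives
`G(z) = (-zq;q)_n G(zq^n)`. On every disc `|z| ≤ r` the terms of `G` are bounded by
`K_r^m |q|^{m^2}`, so `G` is continuous; as `G(0) = 1`, letting `n → ∞` gives `G(z) = (-zq;q)_∞`.
-/

open Finset Filter Topology

section qPochhammer

variable {R : Type*} [CommRing R]

def qPochhammer (a q : R) (n : ℕ) : R := ∏ i ∈ range n, (1 - a * q ^ i)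

@[simp]
lemma qPochhammer_zero (a q : R) : qPochhammer a q 0 = 1 := prod_range_zero _

lemma qPochhammer_succ (a q : R) (n : ℕ) :
    qPochhammer a q (n + 1) = qPochhammer a q n * (1 - a * q ^ n) :=
  prod_range_succ _ _

lemma qPochhammer_succ' (a q : R) (n : ℕ) :
    qPochhammer a q (n + 1) = (1 - a) * qPochhammer (a * q) q n := by
  simp only [qPochhammer, prod_range_succ', pow_zero, mul_one, mul_assoc, ← pow_succ']
  ring

lemma prod_range_one_add_mul_pow_succ (z q : R) (n : ℕ) :
    ∏ i ∈ range n, (1 + z * q ^ (i + 1)) = qPochhammer (-(z * q)) q n :=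
  prod_congr rfl fun _ _ ↦ by ring

lemma prod_range_one_sub_pow_succ (q : R) (n : ℕ) :
    ∏ i ∈ range n, (1 - q ^ (i + 1)) = qPochhammer q q n :=
  prod_congr rfl fun _ _ ↦ by ring

end qPochhammer

lemma Nat.succ_mul_three_mul_succ_add_one_div_two (m : ℕ) :
    (m + 1) * (3 * (m + 1) + 1) / 2 = m * (3 * m + 1) / 2 + (3 * m + 2) := by
  rw [show (m + 1) * (3 * (m + 1) + 1) = m * (3 * m + 1) + 2 * (3 * m + 2) by ring,
    Nat.add_mul_div_left _ _ two_pos]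

lemma Nat.succ_mul_three_mul_succ_sub_one_div_two (m : ℕ) :
    (m + 1) * (3 * (m + 1) - 1) / 2 = m * (3 * m + 1) / 2 + (2 * m + 1) := by
  rw [show (m + 1) * (3 * (m + 1) - 1) = m * (3 * m + 1) + 2 * (2 * m + 1) by
      rw [show 3 * (m + 1) - 1 = 3 * m + 2 by omega]; ring,
    Nat.add_mul_div_left _ _ two_pos]

lemma Nat.mul_self_le_mul_three_mul_add_one_div_two (m : ℕ) : m * m ≤ m * (3 * m + 1) / 2 := by
  rw [Nat.le_div_iff_mul_le two_pos]
  nlinarith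

lemma summable_pow_mul_pow_mul_self (K : ℝ) {ρ : ℝ} (hρ₀ : 0 ≤ ρ) (hρ : ρ < 1) :
    Summable fun m : ℕ ↦ K ^ m * ρ ^ (m * m) := by
  have hsmall : Tendsto (fun m : ℕ ↦ |K| * ρ ^ m) atTop (𝓝 0) := by
    simpa using (tendsto_pow_atTop_nhds_zero_of_lt_one hρ₀ hρ).const_mul |K|
  refine summable_geometric_two.of_norm_bounded_eventually_nat ?_
  filter_upwards [hsmall.eventually (ge_mem_nhds one_half_pos)] with m hm
  calc ‖K ^ m * ρ ^ (m * m)‖ = (|K| * ρ ^ m) ^ m := by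
        rw [norm_mul, norm_pow, norm_pow, Real.norm_eq_abs, Real.norm_of_nonneg hρ₀, mul_pow,
          ← pow_mul]
    _ ≤ (1 / 2) ^ m := by gcongr

lemma tsum_add_eq_add_tsum_add_succ {α : Type*} [AddCommGroup α] [TopologicalSpace α]
    [IsTopologicalAddGroup α] [T2Space α] {f g : ℕ → α} (hf : Summable f) (hg : Summable g) :
    ∑' m, (f m + g m) = f 0 + ∑' m, (g m + f (m + 1)) := by
  rw [hf.tsum_add hg, hg.tsum_add ((summable_nat_add_iff 1).mpr hf), hf.tsum_eq_zero_add]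
  abel

section NormedField

variable {𝕜 : Type*} [NormedField 𝕜] {q : 𝕜}

lemma norm_one_sub_mul_pow_le (a : 𝕜) (hq : ‖q‖ ≤ 1) (k : ℕ) : ‖1 - a * q ^ k‖ ≤ 1 + ‖a‖ :=
  calc ‖1 - a * q ^ k‖ ≤ ‖(1 : 𝕜)‖ + ‖a * q ^ k‖ := norm_sub_le _ _
    _ ≤ 1 + ‖a‖ := by
      rw [norm_one, norm_mul, norm_pow]
      gcongr
      exact mul_le_of_le_one_right (norm_nonneg a) (pow_le_one₀ (norm_nonneg q) hq)

lemma norm_qPochhammer_le (a : 𝕜) (hq : ‖q‖ ≤ 1) (n : ℕ) :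
    ‖qPochhammer a q n‖ ≤ (1 + ‖a‖) ^ n :=
  calc ‖qPochhammer a q n‖ = ∏ i ∈ range n, ‖1 - a * q ^ i‖ := norm_prod _ _
    _ ≤ ∏ _i ∈ range n, (1 + ‖a‖) :=
      prod_le_prod (fun _ _ ↦ norm_nonneg _) fun i _ ↦ norm_one_sub_mul_pow_le a hq i
    _ = (1 + ‖a‖) ^ n := by rw [prod_const, card_range]

lemma one_sub_norm_pow_le_norm_qPochhammer_self (hq : ‖q‖ ≤ 1) (n : ℕ) :
    (1 - ‖q‖) ^ n ≤ ‖qPochhammer q q n‖ := by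
  calc (1 - ‖q‖) ^ n = ∏ _i ∈ range n, (1 - ‖q‖) := by rw [prod_const, card_range]
    _ ≤ ∏ i ∈ range n, ‖1 - q * q ^ i‖ :=
      prod_le_prod (fun _ _ ↦ sub_nonneg.mpr hq) fun i _ ↦ ?_
    _ = ‖qPochhammer q q n‖ := (norm_prod _ _).symm
  calc 1 - ‖q‖ ≤ 1 - ‖q‖ ^ (i + 1) := by
        gcongr
        exact pow_le_of_le_one (norm_nonneg q) hq (by omega)
    _ = ‖(1 : 𝕜)‖ - ‖q * q ^ i‖ := by rw [norm_one, norm_mul, norm_pow, pow_succ']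
    _ ≤ ‖1 - q * q ^ i‖ := norm_sub_norm_le _ _

lemma qPochhammer_self_ne_zero (hq : ‖q‖ < 1) (n : ℕ) : qPochhammer q q n ≠ 0 :=
  norm_pos_iff.mp <| (pow_pos (sub_pos.mpr hq) n).trans_le
    (one_sub_norm_pow_le_norm_qPochhammer_self hq.le n)

end NormedField

section Sylvester

variable {𝕜 : Type*} [Field 𝕜]

def sylvesterCoeff (q z : 𝕜) (m : ℕ) : 𝕜 :=
  qPochhammer (-(z * q)) q m / qPochhammer q q m * z ^ m * q ^ (m * (3 * m + 1) / 2)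

def sylvesterTerm (q z : 𝕜) (m : ℕ) : 𝕜 := sylvesterCoeff q z m * (1 + z * q ^ (2 * m + 1))

lemma sylvesterTerm_sub_one_add_mul_sylvesterTerm (q z : 𝕜) (m : ℕ)
    (h : qPochhammer q q (m + 1) ≠ 0) :
    sylvesterTerm q z m - (1 + z * q) * sylvesterTerm q (z * q) m =
      sylvesterCoeff q z m * (1 - q ^ m) - sylvesterCoeff q z (m + 1) * (1 - q ^ (m + 1)) := by
  have hP : (1 + z * q) * qPochhammer (-(z * q * q)) q m =
      qPochhammer (-(z * q)) q m * (1 + z * q ^ (m + 1)) := by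
    rw [neg_mul_eq_neg_mul (z * q), ← sub_neg_eq_add 1, ← qPochhammer_succ', qPochhammer_succ]
    ring
  have hshift : (1 + z * q) * sylvesterTerm q (z * q) m =
      qPochhammer (-(z * q)) q m * (1 + z * q ^ (m + 1)) / qPochhammer q q m * (z * q) ^ m *
        q ^ (m * (3 * m + 1) / 2) * (1 + z * q * q ^ (2 * m + 1)) := by
    rw [sylvesterTerm, sylvesterCoeff, ← hP]
    ring
  rw [qPochhammer_succ] at h
  have hD : qPochhammer q q m ≠ 0 := left_ne_zero_of_mul h
  have hfactor : 1 - q * q ^ m ≠ 0 := right_ne_zero_of_mul h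
  rw [hshift]
  simp only [sylvesterTerm, sylvesterCoeff, qPochhammer_succ,
    Nat.succ_mul_three_mul_succ_add_one_div_two]
  field_simp
  ring

end Sylvester

section SylvesterSeries

variable {𝕜 : Type*} [NormedField 𝕜] {q : 𝕜}

noncomputable def sylvesterSeries (q z : 𝕜) : 𝕜 := ∑' m, sylvesterTerm q z m

lemma sylvesterSeries_zero (q : 𝕜) : sylvesterSeries q 0 = 1 := by
  rw [sylvesterSeries, tsum_eq_single 0 fun m hm ↦ by simp [sylvesterTerm, sylvesterCoeff, hm]]
  simp [sylvesterTerm, sylvesterCoeff]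

lemma norm_sylvesterCoeff_le (hq : ‖q‖ < 1) {z : 𝕜} {r : ℝ} (hz : ‖z‖ ≤ r) (m : ℕ) :
    ‖sylvesterCoeff q z m‖ ≤ ((1 + r) * r / (1 - ‖q‖)) ^ m * ‖q‖ ^ (m * m) := by
  have hr : 0 ≤ r := (norm_nonneg z).trans hz
  have hP : ‖qPochhammer (-(z * q)) q m‖ ≤ (1 + r) ^ m := by
    refine (norm_qPochhammer_le _ hq.le m).trans (pow_le_pow_left₀ (by positivity) ?_ m)
    rw [norm_neg, norm_mul]
    gcongr
    exact (mul_le_of_le_one_right (norm_nonneg z) hq.le).trans hz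
  have hPD : ‖qPochhammer (-(z * q)) q m‖ / ‖qPochhammer q q m‖ ≤ (1 + r) ^ m / (1 - ‖q‖) ^ m :=
    div_le_div₀ (by positivity) hP (by positivity)
      (one_sub_norm_pow_le_norm_qPochhammer_self hq.le m)
  have hpow : ‖q‖ ^ (m * (3 * m + 1) / 2) ≤ ‖q‖ ^ (m * m) :=
    pow_le_pow_of_le_one (norm_nonneg q) hq.le (Nat.mul_self_le_mul_three_mul_add_one_div_two m)
  calc ‖sylvesterCoeff q z m‖ = ‖qPochhammer (-(z * q)) q m‖ / ‖qPochhammer q q m‖ * ‖z‖ ^ m *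
        ‖q‖ ^ (m * (3 * m + 1) / 2) := by
        rw [sylvesterCoeff, norm_mul, norm_mul, norm_div, norm_pow, norm_pow]
    _ ≤ (1 + r) ^ m / (1 - ‖q‖) ^ m * r ^ m * ‖q‖ ^ (m * m) :=
        mul_le_mul (mul_le_mul hPD (pow_le_pow_left₀ (norm_nonneg z) hz m) (by positivity)
          (by positivity)) hpow (by positivity) (by positivity)
    _ = ((1 + r) * r / (1 - ‖q‖)) ^ m * ‖q‖ ^ (m * m) := by
        rw [div_mul_eq_mul_div, div_pow, mul_pow]

variable [CompleteSpace 𝕜]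

lemma summable_sylvesterCoeff_mul (hq : ‖q‖ < 1) (z : 𝕜) {c : ℕ → 𝕜} {C : ℝ}
    (hc : ∀ m, ‖c m‖ ≤ C) : Summable fun m ↦ sylvesterCoeff q z m * c m := by
  refine ((summable_pow_mul_pow_mul_self ((1 + ‖z‖) * ‖z‖ / (1 - ‖q‖)) (norm_nonneg q)
    hq).mul_left C).of_norm_bounded fun m ↦ ?_
  rw [norm_mul, mul_comm]
  exact mul_le_mul (hc m) (norm_sylvesterCoeff_le hq le_rfl m) (norm_nonneg _)
    ((norm_nonneg _).trans (hc m))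

lemma summable_sylvesterTerm (hq : ‖q‖ < 1) (z : 𝕜) : Summable (sylvesterTerm q z) :=
  summable_sylvesterCoeff_mul hq z fun m ↦ by
    simpa using norm_one_sub_mul_pow_le (-z) hq.le (2 * m + 1)

lemma sylvesterSeries_eq_one_add_mul_mul (hq : ‖q‖ < 1) (z : 𝕜) :
    sylvesterSeries q z = (1 + z * q) * sylvesterSeries q (z * q) := by
  set Y : ℕ → 𝕜 := fun m ↦ sylvesterCoeff q z m * (1 - q ^ m)
  have hY : Summable Y := summable_sylvesterCoeff_mul hq z fun m ↦ by
    simpa using norm_one_sub_mul_pow_le 1 hq.le m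
  have htelescope :
      ∑' m, (sylvesterTerm q z m - (1 + z * q) * sylvesterTerm q (z * q) m) = 0 := by
    rw [tsum_congr fun m ↦ sylvesterTerm_sub_one_add_mul_sylvesterTerm q z m
        (qPochhammer_self_ne_zero hq _),
      hY.tsum_sub ((summable_nat_add_iff 1).mpr hY), hY.tsum_eq_zero_add]
    simp [Y]
  rwa [(summable_sylvesterTerm hq z).tsum_sub ((summable_sylvesterTerm hq _).mul_left _),
    tsum_mul_left, sub_eq_zero] at htelescope

lemma sylvesterSeries_eq_prod_mul (hq : ‖q‖ < 1) (z : 𝕜) (n : ℕ) :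
    sylvesterSeries q z =
      (∏ i ∈ range n, (1 + z * q ^ (i + 1))) * sylvesterSeries q (z * q ^ n) := by
  induction n with
  | zero => simp
  | succ n ih =>
    rw [ih, sylvesterSeries_eq_one_add_mul_mul hq, prod_range_succ, mul_assoc z, ← pow_succ,
      mul_assoc]

lemma continuousOn_sylvesterSeries (hq : ‖q‖ < 1) (r : ℝ) :
    ContinuousOn (sylvesterSeries q) (Metric.closedBall 0 r) := by
  refine continuousOn_tsum (fun m ↦ ?_)
    ((summable_pow_mul_pow_mul_self ((1 + r) * r / (1 - ‖q‖)) (norm_nonneg q) hq).mul_left (1 + r))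
    fun m z hz ↦ ?_
  · unfold sylvesterTerm sylvesterCoeff qPochhammer
    fun_prop
  · rw [mem_closedBall_zero_iff] at hz
    rw [sylvesterTerm, norm_mul, mul_comm]
    have hfactor : ‖1 + z * q ^ (2 * m + 1)‖ ≤ 1 + r :=
      calc ‖1 + z * q ^ (2 * m + 1)‖ ≤ 1 + ‖z‖ := by
            simpa using norm_one_sub_mul_pow_le (-z) hq.le (2 * m + 1)
        _ ≤ 1 + r := by linarith
    exact mul_le_mul hfactor (norm_sylvesterCoeff_le hq hz m) (norm_nonneg _)
      ((norm_nonneg _).trans hfactor)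

lemma continuous_sylvesterSeries (hq : ‖q‖ < 1) : Continuous (sylvesterSeries q) :=
  continuous_iff_continuousAt.mpr fun z ↦ (continuousOn_sylvesterSeries hq (‖z‖ + 1)).continuousAt
    (Metric.closedBall_mem_nhds_of_mem (by simp))

lemma tendsto_sylvesterSeries_mul_pow (hq : ‖q‖ < 1) (z : 𝕜) :
    Tendsto (fun n ↦ sylvesterSeries q (z * q ^ n)) atTop (𝓝 1) := by
  rw [← sylvesterSeries_zero q]
  refine ((continuous_sylvesterSeries hq).tendsto 0).comp ?_
  simpa using (tendsto_pow_atTop_nhds_zero_of_norm_lt_one hq).const_mul z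

theorem tprod_one_add_mul_pow_succ_eq_sylvesterSeries (hq : ‖q‖ < 1) (z : 𝕜) :
    ∏' i : ℕ, (1 + z * q ^ (i + 1)) = sylvesterSeries q z := by
  have hsummable : Summable fun i : ℕ ↦ ‖z * q ^ (i + 1)‖ := by
    simpa [norm_mul, norm_pow, pow_succ', mul_assoc] using
      (summable_geometric_of_lt_one (norm_nonneg q) hq).mul_left (‖z‖ * ‖q‖)
  have hlim := (multipliable_one_add_of_summable hsummable).tendsto_prod_tprod_nat.mul
    (tendsto_sylvesterSeries_mul_pow hq z)
  rw [mul_one] at hlim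
  refine tendsto_nhds_unique hlim ?_
  simp_rw [← sylvesterSeries_eq_prod_mul hq z]
  exact tendsto_const_nhds

end SylvesterSeries

/-- Sylvester's identity (Theorem 2.4, first form): for `|q| < 1`,
`(-zq;q)_∞ = 1 + ∑_{m=1}^∞ [ ((-zq;q)_{m-1}/(q;q)_{m-1}) z^m q^{m(3m-1)/2}
  + ((-zq;q)_m/(q;q)_m) z^m q^{m(3m+1)/2} ]`.
(The series index is shifted: `m + 1` plays the role of `m ≥ 1`.) -/
theorem sylvester_identity (q z : ℂ) (hq : ‖q‖ < 1) :
    (∏' i : ℕ, (1 + z * q ^ (i + 1))) =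
      1 + ∑' m : ℕ,
        (((∏ i ∈ Finset.range m, (1 + z * q ^ (i + 1))) /
            (∏ i ∈ Finset.range m, (1 - q ^ (i + 1)))) *
          z ^ (m + 1) * q ^ ((m + 1) * (3 * (m + 1) - 1) / 2) +
        ((∏ i ∈ Finset.range (m + 1), (1 + z * q ^ (i + 1))) /
            (∏ i ∈ Finset.range (m + 1), (1 - q ^ (i + 1)))) *
          z ^ (m + 1) * q ^ ((m + 1) * (3 * (m + 1) + 1) / 2)) := by
  have hterm (m : ℕ) : sylvesterTerm q z m =
      sylvesterCoeff q z m + sylvesterCoeff q z m * (z * q ^ (2 * m + 1)) := mul_one_add _ _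
  have hcoeff : Summable (sylvesterCoeff q z) := by
    simpa using summable_sylvesterCoeff_mul hq z (c := 1) (C := 1) (by simp)
  have hcoeff_mul : Summable fun m ↦ sylvesterCoeff q z m * (z * q ^ (2 * m + 1)) :=
    summable_sylvesterCoeff_mul hq z fun m ↦ by
      rw [norm_mul, norm_pow]
      exact mul_le_of_le_one_right (norm_nonneg z) (pow_le_one₀ (norm_nonneg q) hq.le)
  rw [tprod_one_add_mul_pow_succ_eq_sylvesterSeries hq, sylvesterSeries,
    tsum_congr hterm, tsum_add_eq_add_tsum_add_succ hcoeff hcoeff_mul]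
  simp_rw [prod_range_one_add_mul_pow_succ, prod_range_one_sub_pow_succ,
    Nat.succ_mul_three_mul_succ_sub_one_div_two]
  congr 1
  · simp [sylvesterCoeff]
  · refine tsum_congr fun m ↦ congrArg (· + sylvesterCoeff q z (m + 1)) ?_
    rw [sylvesterCoeff]
    ring
end

section
/- For all complex q with |q| < 1, (-q;q)_∞ = ∑_{m=0}^{∞} ((-q;q)_m/(q;q)_m) q^{m(3m+1)/2} (1 + q^{2m+1}). -/
open Finset Filter Topology

/-!
Write `F z = ∑ₘ term q z m`, so that Sylvester's identity reads `(-zq; q)_∞ = F z`. Termwise,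
`term q z m - (1 + zq) term q (zq) m` telescopes to `tail q z m - tail q z (m + 1)`, whence
`F z = (1 + zq) F (zq)` and, iterating, `F z = (-zq; q)_N F (z q^N)`. For `‖z‖ ≤ 1` the terms are
bounded by `C ‖q‖^m` uniformly in `z`, so by dominated convergence `F (z q^N) → F 0 = 1`.
-/

namespace Sylvester

def pent (m : ℕ) : ℕ := m * (3 * m + 1) / 2

lemma pent_succ (m : ℕ) : pent (m + 1) = pent m + (3 * m + 2) := by
  rw [pent, pent, show (m + 1) * (3 * (m + 1) + 1) = m * (3 * m + 1) + (3 * m + 2) * 2 by ring,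
    Nat.add_mul_div_right _ _ two_pos]

lemma le_pent (m : ℕ) : m ≤ pent m :=
  (Nat.le_div_iff_mul_le two_pos).2 (by nlinarith [Nat.le_mul_self m])

section Field

variable {K : Type*} [Field K]

/-- `(-zq; q)_m / (q; q)_m` -/
def pochRatio (q z : K) (m : ℕ) : K :=
  (∏ i ∈ range m, (1 + z * q ^ (i + 1))) / ∏ i ∈ range m, (1 - q ^ (i + 1))

def term (q z : K) (m : ℕ) : K :=
  pochRatio q z m * z ^ m * q ^ pent m * (1 + z * q ^ (2 * m + 1))

def tail (q z : K) (m : ℕ) : K :=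
  pochRatio q z m * (1 - q ^ m) * z ^ m * q ^ pent m

lemma pochRatio_succ (q z : K) (m : ℕ) :
    pochRatio q z (m + 1) = pochRatio q z m * ((1 + z * q ^ (m + 1)) / (1 - q ^ (m + 1))) := by
  simp only [pochRatio, prod_range_succ, div_mul_div_comm]

lemma one_add_mul_pochRatio_mul (q z : K) (m : ℕ) :
    (1 + z * q) * pochRatio q (z * q) m = pochRatio q z m * (1 + z * q ^ (m + 1)) := by
  have h : (1 + z * q) * ∏ i ∈ range m, (1 + z * q * q ^ (i + 1))
      = ∏ i ∈ range (m + 1), (1 + z * q ^ (i + 1)) := by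
    simp only [prod_range_succ' _ m, mul_assoc, ← pow_succ']
    ring
  rw [pochRatio, pochRatio, ← mul_div_assoc, h, prod_range_succ, div_mul_eq_mul_div]

lemma tail_zero (q z : K) : tail q z 0 = 0 := by
  simp [tail]

lemma term_sub_one_add_mul_term {q : K} {m : ℕ} (hq : 1 - q ^ (m + 1) ≠ 0) (z : K) :
    term q z m - (1 + z * q) * term q (z * q) m = tail q z m - tail q z (m + 1) := by
  have h := one_add_mul_pochRatio_mul q z m
  rw [term, term, tail, tail, pochRatio_succ, pent_succ]
  calc _ = pochRatio q z m * z ^ m * q ^ pent m * (1 + z * q ^ (2 * m + 1)) -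
        (1 + z * q) * pochRatio q (z * q) m * z ^ m * q ^ m * q ^ pent m *
          (1 + z * q * q ^ (2 * m + 1)) := by ring
    _ = _ := by rw [h]; field_simp; ring

end Field

section Normed

variable {𝕜 : Type*} [NormedField 𝕜] {q z : 𝕜}

lemma norm_mul_pow_le_one (hq : ‖q‖ < 1) (hz : ‖z‖ ≤ 1) (n : ℕ) : ‖z * q ^ n‖ ≤ 1 := by
  rw [norm_mul, norm_pow]
  exact mul_le_one₀ hz (by positivity) (pow_le_one₀ (norm_nonneg _) hq.le)

lemma norm_one_add_le_two {w : 𝕜} (hw : ‖w‖ ≤ 1) : ‖1 + w‖ ≤ 2 :=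
  (norm_add_le _ _).trans (by rw [norm_one]; linarith)

lemma one_sub_pow_succ_ne_zero (hq : ‖q‖ < 1) (k : ℕ) : 1 - q ^ (k + 1) ≠ 0 := by
  refine sub_ne_zero.2 fun h => ?_
  have : ‖q‖ ^ (k + 1) < 1 := pow_lt_one₀ (norm_nonneg q) hq k.succ_ne_zero
  rw [← norm_pow, ← h, norm_one] at this
  exact this.false

lemma norm_prod_one_add_le_exp {R ι : Type*} [NormedCommRing R] [NormOneClass R]
    (s : Finset ι) (f : ι → R) : ‖∏ i ∈ s, (1 + f i)‖ ≤ Real.exp (∑ i ∈ s, ‖f i‖) := by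
  have := norm_le_norm_sub_add (∏ i ∈ s, (1 + f i)) 1
  rw [norm_one] at this
  linarith [s.norm_prod_one_add_sub_one_le f]

lemma norm_div_one_sub_pow_sub_one_le (hq : ‖q‖ < 1) (hz : ‖z‖ ≤ 1) (i : ℕ) :
    ‖(1 + z * q ^ (i + 1)) / (1 - q ^ (i + 1)) - 1‖ ≤ 2 / (1 - ‖q‖) * ‖q‖ ^ i := by
  have hq₁ : 0 < 1 - ‖q‖ := sub_pos.2 hq
  have hden : 1 - ‖q‖ ≤ ‖1 - q ^ (i + 1)‖ :=
    calc 1 - ‖q‖ ≤ ‖(1 : 𝕜)‖ - ‖q ^ (i + 1)‖ := by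
          rw [norm_one, norm_pow]
          linarith [pow_le_of_le_one (norm_nonneg q) hq.le (Nat.add_one_ne_zero i)]
      _ ≤ ‖1 - q ^ (i + 1)‖ := norm_sub_norm_le _ _
  rw [div_sub_one (one_sub_pow_succ_ne_zero hq i), show 1 + z * q ^ (i + 1) - (1 - q ^ (i + 1))
    = (1 + z) * q ^ (i + 1) by ring, norm_div, norm_mul, norm_pow, pow_succ,
    div_le_iff₀ (hq₁.trans_le hden)]
  calc ‖1 + z‖ * (‖q‖ ^ i * ‖q‖) ≤ 2 * ‖q‖ ^ i := by
        gcongr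
        · exact norm_one_add_le_two hz
        · exact mul_le_of_le_one_right (by positivity) hq.le
    _ = 2 / (1 - ‖q‖) * ‖q‖ ^ i * (1 - ‖q‖) := by field_simp
    _ ≤ 2 / (1 - ‖q‖) * ‖q‖ ^ i * ‖1 - q ^ (i + 1)‖ := by gcongr

lemma norm_pochRatio_le (hq : ‖q‖ < 1) (hz : ‖z‖ ≤ 1) (m : ℕ) :
    ‖pochRatio q z m‖ ≤ Real.exp (2 / (1 - ‖q‖) ^ 2) := by
  have hq₀ : 0 ≤ ‖q‖ := norm_nonneg q
  have hgeom : ∑ i ∈ range m, ‖q‖ ^ i ≤ (1 - ‖q‖)⁻¹ := by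
    rw [← tsum_geometric_of_lt_one hq₀ hq]
    exact (summable_geometric_of_lt_one hq₀ hq).sum_le_tsum _ fun i _ => pow_nonneg hq₀ i
  calc ‖pochRatio q z m‖
      = ‖∏ i ∈ range m, (1 + ((1 + z * q ^ (i + 1)) / (1 - q ^ (i + 1)) - 1))‖ := by
        simp only [pochRatio, prod_div_distrib, add_sub_cancel]
    _ ≤ Real.exp (∑ i ∈ range m, 2 / (1 - ‖q‖) * ‖q‖ ^ i) :=
        (norm_prod_one_add_le_exp _ _).trans <| Real.exp_le_exp.2 <|
          sum_le_sum fun i _ => norm_div_one_sub_pow_sub_one_le hq hz i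
    _ ≤ Real.exp (2 / (1 - ‖q‖) * (1 - ‖q‖)⁻¹) := by
        rw [← mul_sum]
        have : 0 < 1 - ‖q‖ := sub_pos.2 hq
        gcongr
    _ = Real.exp (2 / (1 - ‖q‖) ^ 2) := by
        congr 1
        field_simp

lemma norm_term_le (hq : ‖q‖ < 1) (hz : ‖z‖ ≤ 1) (m : ℕ) :
    ‖term q z m‖ ≤ 2 * Real.exp (2 / (1 - ‖q‖) ^ 2) * ‖q‖ ^ m := by
  have hq₀ : 0 ≤ ‖q‖ := norm_nonneg q
  rw [term, norm_mul, norm_mul, norm_mul, norm_pow, norm_pow]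
  calc ‖pochRatio q z m‖ * ‖z‖ ^ m * ‖q‖ ^ pent m * ‖1 + z * q ^ (2 * m + 1)‖
      ≤ Real.exp (2 / (1 - ‖q‖) ^ 2) * 1 * ‖q‖ ^ m * 2 := by
        gcongr ?_ * ?_ * ?_ * ?_
        · exact norm_pochRatio_le hq hz m
        · exact pow_le_one₀ (norm_nonneg z) hz
        · exact pow_le_pow_of_le_one hq₀ hq.le (le_pent m)
        · exact norm_one_add_le_two (norm_mul_pow_le_one hq hz _)
    _ = 2 * Real.exp (2 / (1 - ‖q‖) ^ 2) * ‖q‖ ^ m := by ring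

lemma norm_tail_le (hq : ‖q‖ < 1) (hz : ‖z‖ ≤ 1) (m : ℕ) :
    ‖tail q z m‖ ≤ 2 * Real.exp (2 / (1 - ‖q‖) ^ 2) * ‖q‖ ^ m := by
  have hq₀ : 0 ≤ ‖q‖ := norm_nonneg q
  rw [tail, norm_mul, norm_mul, norm_mul, norm_pow, norm_pow, sub_eq_add_neg]
  calc ‖pochRatio q z m‖ * ‖1 + -q ^ m‖ * ‖z‖ ^ m * ‖q‖ ^ pent m
      ≤ Real.exp (2 / (1 - ‖q‖) ^ 2) * 2 * 1 * ‖q‖ ^ m := by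
        gcongr ?_ * ?_ * ?_ * ?_
        · exact norm_pochRatio_le hq hz m
        · exact norm_one_add_le_two (by rw [norm_neg, norm_pow]; exact pow_le_one₀ hq₀ hq.le)
        · exact pow_le_one₀ (norm_nonneg z) hz
        · exact pow_le_pow_of_le_one hq₀ hq.le (le_pent m)
    _ = 2 * Real.exp (2 / (1 - ‖q‖) ^ 2) * ‖q‖ ^ m := by ring

lemma tendsto_tail (hq : ‖q‖ < 1) (hz : ‖z‖ ≤ 1) : Tendsto (tail q z) atTop (𝓝 0) :=
  squeeze_zero_norm (norm_tail_le hq hz) <| by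
    simpa using (tendsto_pow_atTop_nhds_zero_of_lt_one (norm_nonneg q) hq).const_mul
      (2 * Real.exp (2 / (1 - ‖q‖) ^ 2))

lemma continuous_term (q : 𝕜) (m : ℕ) : Continuous fun z => term q z m := by
  unfold term pochRatio
  fun_prop

lemma tsum_term_zero (q : 𝕜) : ∑' m, term q 0 m = 1 := by
  rw [tsum_eq_single 0 fun m hm => by simp [term, hm]]
  simp [term, pochRatio, pent]

variable [CompleteSpace 𝕜]

lemma summable_term (hq : ‖q‖ < 1) (hz : ‖z‖ ≤ 1) : Summable (term q z) :=
  .of_norm_bounded ((summable_geometric_of_lt_one (norm_nonneg q) hq).mul_left _)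
    (norm_term_le hq hz)

lemma multipliable_one_add_mul_pow (hq : ‖q‖ < 1) (hz : ‖z‖ ≤ 1) :
    Multipliable fun i : ℕ => 1 + z * q ^ (i + 1) := by
  refine multipliable_one_add_of_summable (.of_nonneg_of_le (fun _ => norm_nonneg _) (fun i => ?_)
    ((summable_nat_add_iff 1).2 (summable_geometric_of_lt_one (norm_nonneg q) hq)))
  rw [norm_mul, norm_pow]
  exact mul_le_of_le_one_left (by positivity) hz

lemma tsum_term_eq_one_add_mul (hq : ‖q‖ < 1) (hz : ‖z‖ ≤ 1) :
    ∑' m, term q z m = (1 + z * q) * ∑' m, term q (z * q) m := by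
  have hs := summable_term hq hz
  have hzq : ‖z * q‖ ≤ 1 := by simpa using norm_mul_pow_le_one hq hz 1
  have hs' := (summable_term hq hzq).mul_left (1 + z * q)
  have htelescope : Tendsto (fun n => ∑ m ∈ range n, (term q z m - (1 + z * q) * term q (z * q) m))
      atTop (𝓝 0) := by
    simp only [term_sub_one_add_mul_term (one_sub_pow_succ_ne_zero hq _), sum_range_sub',
      tail_zero, zero_sub]
    simpa using (tendsto_tail hq hz).neg
  rw [← sub_eq_zero, ← tsum_mul_left, ← hs.tsum_sub hs']
  exact tendsto_nhds_unique (hs.sub hs').tendsto_sum_tsum_nat htelescope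

lemma tsum_term_eq_prod_mul (hq : ‖q‖ < 1) (hz : ‖z‖ ≤ 1) (N : ℕ) :
    ∑' m, term q z m = (∏ i ∈ range N, (1 + z * q ^ (i + 1))) * ∑' m, term q (z * q ^ N) m := by
  induction N with
  | zero => simp
  | succ n ih =>
    rw [ih, tsum_term_eq_one_add_mul hq (norm_mul_pow_le_one hq hz n), prod_range_succ]
    ring_nf

lemma tendsto_tsum_term_mul_pow (hq : ‖q‖ < 1) (hz : ‖z‖ ≤ 1) :
    Tendsto (fun N => ∑' m, term q (z * q ^ N) m) atTop (𝓝 1) := by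
  rw [← tsum_term_zero q]
  refine tendsto_tsum_of_dominated_convergence
    ((summable_geometric_of_lt_one (norm_nonneg q) hq).mul_left _) (fun m => ?_)
    (.of_forall fun N => norm_term_le hq (norm_mul_pow_le_one hq hz N))
  refine ((continuous_term q m).tendsto 0).comp ?_
  simpa using (tendsto_pow_atTop_nhds_zero_of_norm_lt_one hq).const_mul z

theorem tprod_eq_tsum_term (hq : ‖q‖ < 1) (hz : ‖z‖ ≤ 1) :
    ∏' i : ℕ, (1 + z * q ^ (i + 1)) = ∑' m, term q z m := by
  have hlim := (multipliable_one_add_mul_pow hq hz).hasProd.tendsto_prod_nat.mul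
    (tendsto_tsum_term_mul_pow hq hz)
  rw [mul_one] at hlim
  exact tendsto_nhds_unique hlim (tendsto_const_nhds.congr (tsum_term_eq_prod_mul hq hz))

end Normed

end Sylvester

/-- The `z = 1` case of Sylvester's identity: for `|q| < 1`,
`(-q;q)_∞ = ∑_{m=0}^∞ ((-q;q)_m/(q;q)_m) q^{m(3m+1)/2} (1 + q^{2m+1})`. -/
theorem sylvester_z_eq_one (q : ℂ) (hq : ‖q‖ < 1) :
    (∏' i : ℕ, (1 + q ^ (i + 1))) =
      ∑' m : ℕ,
        ((∏ i ∈ Finset.range m, (1 + q ^ (i + 1))) /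
            (∏ i ∈ Finset.range m, (1 - q ^ (i + 1)))) *
          q ^ (m * (3 * m + 1) / 2) * (1 + q ^ (2 * m + 1)) := by
  simpa [Sylvester.term, Sylvester.pochRatio, Sylvester.pent] using
    Sylvester.tprod_eq_tsum_term hq (z := 1) (by simp)
end
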